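/- [ℛTxtSdCIndEx_C]_REC ⊊ [TxtSdCIndEx_C]_REC; that is, every class of recursive languages CIndEx_C-learnable by a total computable set-driven learner is CIndEx_C-learnable by a partial computable set-driven learner, and there exists a class of recursive languages CIndEx_C-learnable by a partial computable set-driven learner but by no total computable set-driven learner. -/

import Mathlib

/-!
The separating class has one language `diagLang k` per index `k`, built inside the column
`{⟨k, y⟩}` to defeat `φ_k` read as a set-driven learner. At stage `j` the guess `e` of `φ_k` on
`D_j = {⟨k, 0⟩, ⟨k, 2⟩, …, ⟨k, 2j⟩}` is evaluated at the next point `⟨k, 2j + 2⟩`.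
* If `e` rejects it at every stage, the language is the even column: a limit index of `φ_k`
  would have to reject a point of its own language.
* At the first stage where the evaluation returns a nonzero value, the language is `D_j`, and a
  limit C-index of `φ_k` on it would contain `⟨k, 2j + 2⟩`.
* At the first stage where it diverges, `φ_k` is not total or outputs a non-C-index on `D_j`,
  so it fails on the language `D_j ∪ {⟨k, 2j + 1⟩}` that has `D_j` as an initial content.

A partial learner copes: an odd marker `⟨k, 2j + 1⟩` tells it the language outright, and on a
marker-free set of size `j + 1` it waits for stage `j`, which converges whenever that set is the
limit content of a text for a language of the class.
-/

namespace InductiveInference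

/-- `φ_e` : the `e`-th partial computable function, via the standard numbering
of `Nat.Partrec.Code`. -/
def phi (e : ℕ) : ℕ →. ℕ := (Denumerable.ofNat Nat.Partrec.Code e).eval

/-- `W_e` : the domain of `φ_e`. -/
def Wset (e : ℕ) : Set ℕ := (phi e).Dom

/-- `e` is a C-index: `φ_e` is total with values in `{0,1}`. -/
def CIndex (e : ℕ) : Prop := ∀ x, phi e x = Part.some 0 ∨ phi e x = Part.some 1

/-- `C_e = {x | φ_e x = 1}`. -/
def Cset (e : ℕ) : Set ℕ := {x | phi e x = Part.some 1}

/-- A language is recursive (decidable). -/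
def RecLang (L : Set ℕ) : Prop := ∃ f : ℕ → Bool, Computable f ∧ ∀ x, x ∈ L ↔ f x = true

/-- Texts: total functions `ℕ → ℕ ∪ {#}`; `none` is the pause symbol `#`. -/
abbrev Text := ℕ → Option ℕ

/-- The content of a text: its range minus the pause symbol. -/
def content (T : Text) : Set ℕ := {x | ∃ n, T n = some x}

/-- The initial segment `T[n] = (T 0, …, T (n-1))`. -/
def initSeg (T : Text) (n : ℕ) : List (Option ℕ) := (List.range n).map T

/-- The (finite) content of the initial segment `T[n]`. -/
def fincontent (T : Text) (n : ℕ) : Finset ℕ := ((initSeg T n).filterMap id).toFinset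

/-- A canonical numerical code for a finite set of naturals. -/
def setCode (D : Finset ℕ) : ℕ := Encodable.encode (D.sort (· ≤ ·))

/-- Learners: partial functions on (suitably coded) natural number inputs. -/
abbrev Learner := ℕ →. ℕ

/-- The learner is partial computable. -/
def PartComputable (h : Learner) : Prop := Nat.Partrec h

/-- The learner is total computable. -/
def TotalComputable (h : Learner) : Prop := Nat.Partrec h ∧ ∀ x, (h x).Dom

/-- Hypothesis sequences (possibly undefined at some points). -/
abbrev HypSeq := ℕ → Part ℕ

/-- Gold-style (full-information) learning: `G(h,T)(i) = h(T[i])`. -/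
def Gop (h : Learner) (T : Text) (i : ℕ) : Part ℕ :=
  h (Encodable.encode (initSeg T i))

/-- Partially set-driven learning: `Psd(h,T)(i) = h(content T[i], i)`. -/
def Psdop (h : Learner) (T : Text) (i : ℕ) : Part ℕ :=
  h (Nat.pair (setCode (fincontent T i)) i)

/-- Set-driven learning: `Sd(h,T)(i) = h(content T[i])`. -/
def Sdop (h : Learner) (T : Text) (i : ℕ) : Part ℕ :=
  h (setCode (fincontent T i))

/-- Iterative learning: the input `none` codes the empty start sequence `ε`,
and `some (e, x)` codes the pair of previous hypothesis `e` and datum `x`. -/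
def Itop (h : Learner) (T : Text) : ℕ → Part ℕ
  | 0 => h (Encodable.encode (none : Option (ℕ × Option ℕ)))
  | i + 1 => (Itop h T i).bind fun e =>
      h (Encodable.encode (some (e, T i) : Option (ℕ × Option ℕ)))

/-- Transductive learning: the learner receives the single (coded) datum
`T i`; the output `0` codes the distinguished symbol `?`, and the output
`e + 1` codes the hypothesis `e`.  The value `?` of the hypothesis sequence
is represented by `Part.none`. -/
def Tdop (h : Learner) (T : Text) : ℕ → Part ℕ
  | 0 => Part.none
  | i + 1 => (h (Encodable.encode (T i))).bind fun v =>
      match v with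
      | 0 => Tdop h T i
      | e + 1 => Part.some e

/-- `Ex_C`: syntactic convergence to a single correct C-index. -/
def ExC (p : HypSeq) (T : Text) : Prop :=
  ∃ n₀, (∀ n, n₀ ≤ n → p n = p n₀) ∧
    ∃ e, p n₀ = Part.some e ∧ CIndex e ∧ Cset e = content T

/-- `Ex_W`: syntactic convergence to a single correct W-index. -/
def ExW (p : HypSeq) (T : Text) : Prop :=
  ∃ n₀, (∀ n, n₀ ≤ n → p n = p n₀) ∧
    ∃ e, p n₀ = Part.some e ∧ Wset e = content T

/-- `Bc_C`: semantic convergence to correct C-indices. -/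
def BcC (p : HypSeq) (T : Text) : Prop :=
  ∃ n₀, ∀ n, n₀ ≤ n → ∃ e, p n = Part.some e ∧ CIndex e ∧ Cset e = content T

/-- `Bc_W`: semantic convergence to correct W-indices. -/
def BcW (p : HypSeq) (T : Text) : Prop :=
  ∃ n₀, ∀ n, n₀ ≤ n → ∃ e, p n = Part.some e ∧ Wset e = content T

/-- `CInd`: every hypothesis output is a C-index. -/
def CIndRes (p : HypSeq) (_T : Text) : Prop :=
  ∀ i e, p i = Part.some e → CIndex e

/-- `T`: the always-true restriction. -/
def TrueRes (_p : HypSeq) (_T : Text) : Prop := True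

abbrev InteractionOp := Learner → Text → HypSeq
abbrev Restriction := HypSeq → Text → Prop

/-- Conjunction of restrictions. -/
def andRes (δ δ' : Restriction) : Restriction := fun p T => δ p T ∧ δ' p T

/-- `h` `Txtβδ`-learns `L`: on every text for `L` the restriction `δ` holds. -/
def Learns (β : InteractionOp) (δ : Restriction) (h : Learner) (L : Set ℕ) : Prop :=
  ∀ T : Text, content T = L → δ (β h T) T

/-- The restriction `α` holds for `h` on all texts whatsoever. -/
def OnAllTexts (β : InteractionOp) (α : Restriction) (h : Learner) : Prop :=
  ∀ T : Text, α (β h T) T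

/-- A class of recursive languages. -/
def IsRecClass (ℒ : Set (Set ℕ)) : Prop := ∀ L ∈ ℒ, RecLang L

/-- `[𝒞Txtβδ]_REC`: classes of recursive languages learnable by some
learner from `C` under interaction operator `β` and restriction `δ`. -/
def LearnableREC (C : Learner → Prop) (β : InteractionOp) (δ : Restriction) :
    Set (Set (Set ℕ)) :=
  {ℒ | IsRecClass ℒ ∧ ∃ h, C h ∧ ∀ L ∈ ℒ, Learns β δ h L}

/-- `[τ(α)𝒞Txtβδ]_REC`: as above, where additionally `α` must hold on
arbitrary texts. -/
def TauLearnableREC (C : Learner → Prop) (α : Restriction) (β : InteractionOp)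
    (δ : Restriction) : Set (Set (Set ℕ)) :=
  {ℒ | IsRecClass ℒ ∧ ∃ h, C h ∧ OnAllTexts β α h ∧ ∀ L ∈ ℒ, Learns β δ h L}

open Nat.Partrec (Code)
open Encodable Filter

theorem phi_encode (c : Code) : phi (encode c) = c.eval := by
  rw [phi, Denumerable.ofNat_encode]

theorem exists_phi_eq {f : ℕ →. ℕ} (hf : Nat.Partrec f) : ∃ e, phi e = f := by
  obtain ⟨c, rfl⟩ := Code.exists_code.1 hf
  exact ⟨encode c, phi_encode c⟩

theorem phi_partrec : Partrec₂ phi :=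
  Code.eval_part.comp ((Computable.ofNat Code).comp Computable.fst) Computable.snd

theorem Partrec.ite_some {α σ : Type*} [Primcodable α] [Primcodable σ] {c : α → Prop}
    [DecidablePred c] {f : α → σ} {g : α →. σ} (hc : PrimrecPred c) (hf : Computable f)
    (hg : Partrec g) : Partrec fun a => if c a then Part.some (f a) else g a :=
  (Partrec.optionCasesOn_right (o := fun a => if c a then none else some ())
    (Primrec.ite hc (Primrec.const none) (Primrec.const (some ()))).to_comp hf
    (hg.comp Computable.fst).to₂).of_eq fun a => by by_cases h : c a <;> simp [h]

theorem exists_computable_cIndex {α : Type*} [Primcodable α] {p : α → ℕ → Bool}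
    (hp : Computable₂ p) :
    ∃ g : α → ℕ, Computable g ∧ ∀ a, CIndex (g a) ∧ Cset (g a) = {x | p a x} := by
  let F : ℕ → ℕ := fun m =>
    (decode (α := α) m.unpair.1).elim 0 fun a => cond (p a m.unpair.2) 1 0
  have hF : Computable F :=
    Computable.option_casesOn
      (Computable.decode.comp (Computable.fst.comp Computable.unpair)) (Computable.const 0)
      (Computable.cond (hp.comp Computable.snd (Computable.snd.comp
        (Computable.unpair.comp Computable.fst))) (Computable.const 1) (Computable.const 0)).to₂
      |>.of_eq fun m => by simp only [F]; cases decode (α := α) m.unpair.1 <;> rfl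
  obtain ⟨c, hc⟩ := Code.exists_code.1 (Partrec.nat_iff.1 hF.partrec)
  refine ⟨fun a => encode (c.curry (encode a)),
    (Primrec.encode.comp (Code.primrec₂_curry.comp (Primrec.const c) Primrec.encode)).to_comp,
    fun a => ?_⟩
  have hphi : ∀ x, phi (encode (c.curry (encode a))) x = Part.some (cond (p a x) 1 0) := by
    intro x
    simp [phi_encode, Code.eval_curry, hc, F]
  refine ⟨fun x => ?_, Set.ext fun x => ?_⟩ <;> cases hpx : p a x <;> simp [Cset, hphi, hpx]

theorem recLang_cset {e : ℕ} (he : CIndex e) : RecLang (Cset e) := by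
  have hdom : ∀ x, (phi e x).Dom := fun x => by rcases he x with h | h <;> simp [h]
  have hget : Computable fun x => (phi e x).get (hdom x) :=
    (phi_partrec.comp (Computable.const e) Computable.id).of_eq_tot fun x => Part.get_mem _
  refine ⟨fun x => decide ((phi e x).get (hdom x) = 1),
    Primrec.eq.decide.to_comp.comp hget (Computable.const 1), fun x => ?_⟩
  simp [Cset, Part.get_eq_iff_eq_some]

open Classical in
theorem content_indicator (L : Set ℕ) :
    content (fun n => if n ∈ L then some n else none) = L := by
  ext x
  simp [content]

theorem recLang_of_learns {β : InteractionOp} {δ : Restriction} {h : Learner} {L : Set ℕ}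
    (hL : Learns β (andRes δ ExC) h L) : RecLang L := by
  classical
  obtain ⟨-, n₀, -, e, -, he, hCset⟩ := hL _ (content_indicator L)
  exact content_indicator L ▸ hCset ▸ recLang_cset he

theorem learnableREC_mono {C C' : Learner → Prop} (hCC' : ∀ h, C h → C' h) {β : InteractionOp}
    {δ : Restriction} : LearnableREC C β δ ⊆ LearnableREC C' β δ :=
  fun _ ⟨hrec, h, hh, hl⟩ => ⟨hrec, h, hCC' h hh, hl⟩

theorem exC_iff {p : HypSeq} {T : Text} :
    ExC p T ↔ ∃ e, CIndex e ∧ Cset e = content T ∧ ∀ᶠ n in atTop, p n = Part.some e := by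
  constructor
  · rintro ⟨n₀, hconst, e, he, hC, hS⟩
    exact ⟨e, hC, hS, eventually_atTop.2 ⟨n₀, fun n hn => (hconst n hn).trans he⟩⟩
  · rintro ⟨e, hC, hS, hev⟩
    obtain ⟨n₀, hn₀⟩ := eventually_atTop.1 hev
    exact ⟨n₀, fun n hn => (hn₀ n hn).trans (hn₀ n₀ le_rfl).symm, e, hn₀ n₀ le_rfl, hC, hS⟩

theorem mem_fincontent {T : Text} {n x : ℕ} : x ∈ fincontent T n ↔ ∃ i < n, T i = some x := by
  simp [fincontent, initSeg]

theorem coe_fincontent_subset (T : Text) (n : ℕ) : ↑(fincontent T n) ⊆ content T :=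
  fun _ hx => (mem_fincontent.1 hx).elim fun i hi => ⟨i, hi.2⟩

theorem eventually_mem_fincontent {T : Text} {x : ℕ} (hx : x ∈ content T) :
    ∀ᶠ n in atTop, x ∈ fincontent T n := by
  obtain ⟨i, hi⟩ := hx
  exact eventually_atTop.2 ⟨i + 1, fun n hn => mem_fincontent.2 ⟨i, by omega, hi⟩⟩

theorem eventually_fincontent_eq {T : Text} {D : Finset ℕ} (hT : content T = ↑D) :
    ∀ᶠ n in atTop, fincontent T n = D := by
  have hall := (eventually_all_finset D).2 fun x hx =>
    eventually_mem_fincontent (hT ▸ Finset.mem_coe.2 hx)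
  filter_upwards [hall] with n hn
  exact Finset.Subset.antisymm (fun x hx => by simpa [hT] using coe_fincontent_subset T n hx)
    fun x hx => hn x hx

theorem content_some_comp (f : ℕ → ℕ) : content (fun i => some (f i)) = Set.range f := by
  ext x
  simp [content]

theorem fincontent_some_comp (f : ℕ → ℕ) (n : ℕ) :
    fincontent (fun i => some (f i)) n = (Finset.range n).image f := by
  ext x
  simp [mem_fincontent]

def columnPt (k i : ℕ) : ℕ := Nat.pair k (2 * i)

def marker (k j : ℕ) : ℕ := Nat.pair k (2 * j + 1)

def column (k : ℕ) : Set ℕ := Set.range (columnPt k)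

def columnList (k j : ℕ) : List ℕ := (List.range (j + 1)).map (columnPt k)

def columnSeg (k j : ℕ) : Finset ℕ := (Finset.range (j + 1)).image (columnPt k)

def diagStep (k j : ℕ) : Part ℕ :=
  (phi k (setCode (columnSeg k j))).bind fun e => phi e (columnPt k (j + 1))

open Classical in
noncomputable def diagLang (k : ℕ) : Set ℕ :=
  if h : ∃ j, diagStep k j ≠ Part.some 0 then
    if (diagStep k (Nat.find h)).Dom then ↑(columnSeg k (Nat.find h))
    else ↑(insert (marker k (Nat.find h)) (columnSeg k (Nat.find h)))
  else column k

noncomputable def diagClass : Set (Set ℕ) := Set.range diagLang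

theorem diagLang_cases (k : ℕ) :
    (∀ j, diagStep k j = Part.some 0) ∧ diagLang k = column k ∨
    (∃ j v, diagStep k j = Part.some v ∧ v ≠ 0 ∧ diagLang k = ↑(columnSeg k j)) ∨
    ∃ j, ¬(diagStep k j).Dom ∧ diagLang k = ↑(insert (marker k j) (columnSeg k j)) := by
  classical
  unfold diagLang
  split_ifs with h hdom
  · refine Or.inr (Or.inl ⟨_, _, (Part.some_get hdom).symm, fun h0 => ?_, rfl⟩)
    exact Nat.find_spec h (by rw [← Part.some_get hdom, h0])
  · exact Or.inr (Or.inr ⟨_, hdom, rfl⟩)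
  · exact Or.inl ⟨fun j => not_not.1 (not_exists.1 h j), rfl⟩

theorem columnPt_unpair (k i : ℕ) : (columnPt k i).unpair = (k, 2 * i) := Nat.unpair_pair _ _

theorem marker_unpair (k j : ℕ) : (marker k j).unpair = (k, 2 * j + 1) := Nat.unpair_pair _ _

theorem columnPt_injective (k : ℕ) : Function.Injective (columnPt k) := fun i i' h => by
  have := (Nat.pair_eq_pair.1 h).2
  omega

theorem mem_column_iff {k x : ℕ} : x ∈ column k ↔ x.unpair.1 = k ∧ x.unpair.2 % 2 = 0 := by
  constructor
  · rintro ⟨i, rfl⟩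
    simp [columnPt_unpair]
  · rintro ⟨h1, h2⟩
    refine ⟨x.unpair.2 / 2, ?_⟩
    rw [columnPt, Nat.mul_div_cancel' (Nat.dvd_of_mod_eq_zero h2), ← h1, Nat.pair_unpair]

theorem columnSeg_subset_column (k j : ℕ) : ↑(columnSeg k j) ⊆ column k := by
  intro x hx
  obtain ⟨i, -, rfl⟩ := Finset.mem_image.1 hx
  exact ⟨i, rfl⟩

theorem columnPt_succ_not_mem_columnSeg (k j : ℕ) : columnPt k (j + 1) ∉ columnSeg k j := by
  simp [columnSeg, (columnPt_injective k).eq_iff]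

theorem sort_columnSeg (k j : ℕ) : (columnSeg k j).sort (· ≤ ·) = columnList k j := by
  have hmono : StrictMono (columnPt k) := fun i i' h => Nat.pair_lt_pair_right _ (by omega)
  have hsorted : (columnList k j).Pairwise (· < ·) :=
    List.pairwise_map.2 (List.pairwise_lt_range.imp fun h => hmono h)
  have hseg : columnSeg k j = (columnList k j).toFinset := by
    ext x
    simp [columnSeg, columnList]
  rw [hseg]
  exact (List.toFinset_sort _ (hsorted.imp ne_of_lt)).2 (hsorted.imp le_of_lt)

theorem setCode_columnSeg (k j : ℕ) : setCode (columnSeg k j) = encode (columnList k j) := by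
  rw [setCode, sort_columnSeg]

theorem exists_computable_listIndex :
    ∃ finIdx : List ℕ → ℕ, Computable finIdx ∧
      ∀ l, CIndex (finIdx l) ∧ Cset (finIdx l) = {x | x ∈ l} := by
  simpa using exists_computable_cIndex (p := fun (l : List ℕ) x => decide (x ∈ l))
    ((PrimrecRel.exists_mem_list Primrec.eq).decide.to_comp.of_eq fun p => by simp)

theorem exists_computable_columnIndex :
    ∃ colIdx : ℕ → ℕ, Computable colIdx ∧
      ∀ k, CIndex (colIdx k) ∧ Cset (colIdx k) = column k := by
  simpa [Set.ext_iff, mem_column_iff] using exists_computable_cIndex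
    (p := fun k x => decide (x.unpair.1 = k ∧ x.unpair.2 % 2 = 0))
    ((Primrec.eq.comp (Primrec.fst.comp (Primrec.unpair.comp Primrec.snd)) Primrec.fst).and
      (Primrec.eq.comp (Primrec.nat_mod.comp (Primrec.snd.comp (Primrec.unpair.comp
        Primrec.snd)) (Primrec.const 2)) (Primrec.const 0))).decide.to_comp.to₂

theorem columnList_primrec : Primrec₂ columnList :=
  (Primrec.list_map (Primrec.list_range.comp (Primrec.succ.comp Primrec.snd))
    (Primrec₂.natPair.comp (Primrec.fst.comp Primrec.fst)
      (Primrec.nat_mul.comp (Primrec.const 2) Primrec.snd)).to₂).to₂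

theorem diagStep_partrec : Partrec₂ diagStep := by
  have hguess : Partrec fun p : ℕ × ℕ => phi p.1 (setCode (columnSeg p.1 p.2)) := by
    simp only [setCode_columnSeg]
    exact phi_partrec.comp Computable.fst
      (Computable.encode.comp (columnList_primrec.to_comp.comp Computable.fst Computable.snd))
  have hprobe : Computable fun p : ℕ × ℕ => columnPt p.1 (p.2 + 1) :=
    (Primrec₂.natPair.comp Primrec.fst
      (Primrec.nat_mul.comp (Primrec.const 2) (Primrec.succ.comp Primrec.snd))).to_comp
  exact (hguess.bind (phi_partrec.comp Computable.snd (hprobe.comp Computable.fst)).to₂).to₂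

section Learner

variable (finIdx : List ℕ → ℕ) (colIdx : ℕ → ℕ)

def learnerBody (l : List ℕ) : Part ℕ :=
  if ∃ x ∈ l, x.unpair.2 % 2 = 1 then Part.some (finIdx l)
  else (diagStep l.headI.unpair.1 (l.length - 1)).map fun v =>
    if v = 0 then colIdx l.headI.unpair.1 else finIdx l

def sdLearner : Learner := fun n => (Part.ofOption (decode n)).bind (learnerBody finIdx colIdx)

variable {finIdx colIdx}

theorem sdLearner_partrec (hfin : Computable finIdx) (hcol : Computable colIdx) :
    Nat.Partrec (sdLearner finIdx colIdx) := by
  have hmarker : PrimrecPred fun l : List ℕ => ∃ x ∈ l, x.unpair.2 % 2 = 1 :=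
    PrimrecPred.exists_mem_list (Primrec.eq.comp (Primrec.nat_mod.comp
      (Primrec.snd.comp Primrec.unpair) (Primrec.const 2)) (Primrec.const 1))
  have hk : Computable fun l : List ℕ => l.headI.unpair.1 :=
    (Primrec.fst.comp (Primrec.unpair.comp Primrec.list_headI)).to_comp
  have hout : Computable fun p : List ℕ × ℕ =>
      if p.2 = 0 then colIdx p.1.headI.unpair.1 else finIdx p.1 :=
    (Computable.cond (Primrec.eq.decide.to_comp.comp Computable.snd (Computable.const 0))
      (hcol.comp (hk.comp Computable.fst)) (hfin.comp Computable.fst)).of_eq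
      fun p => by by_cases h : p.2 = 0 <;> simp [h]
  have hbody : Partrec (learnerBody finIdx colIdx) :=
    Partrec.ite_some hmarker hfin ((diagStep_partrec.comp hk
      (Primrec.nat_sub.comp Primrec.list_length (Primrec.const 1)).to_comp).map hout.to₂)
  exact Partrec.nat_iff.1 (Computable.decode.ofOption.bind (hbody.comp Computable.snd).to₂)

theorem sdLearner_setCode (D : Finset ℕ) :
    sdLearner finIdx colIdx (setCode D) = learnerBody finIdx colIdx (D.sort (· ≤ ·)) := by
  simp [sdLearner, setCode]

theorem sdLearner_of_odd_mem {D : Finset ℕ} {x : ℕ} (hx : x ∈ D) (hodd : x.unpair.2 % 2 = 1) :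
    sdLearner finIdx colIdx (setCode D) = Part.some (finIdx (D.sort (· ≤ ·))) := by
  rw [sdLearner_setCode, learnerBody, if_pos ⟨x, (Finset.mem_sort _).2 hx, hodd⟩]

theorem sdLearner_of_subset_column {D : Finset ℕ} {k : ℕ} (hne : D.Nonempty)
    (hsub : ↑D ⊆ column k) :
    sdLearner finIdx colIdx (setCode D) = (diagStep k (D.card - 1)).map fun v =>
      if v = 0 then colIdx k else finIdx (D.sort (· ≤ ·)) := by
  have hmem : ∀ x ∈ D.sort (· ≤ ·), x.unpair.1 = k ∧ x.unpair.2 % 2 = 0 :=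
    fun x hx => mem_column_iff.1 (hsub ((Finset.mem_sort _).1 hx))
  have hhead : (D.sort (· ≤ ·)).headI.unpair.1 = k := by
    obtain ⟨x, hx⟩ := hne
    have hx' : x ∈ D.sort (· ≤ ·) := (Finset.mem_sort _).2 hx
    obtain ⟨a, t, hat⟩ := List.exists_cons_of_ne_nil (List.ne_nil_of_mem hx')
    rw [hat]
    exact (hmem a (hat ▸ List.mem_cons_self)).1
  have hnodd : ¬∃ x ∈ D.sort (· ≤ ·), x.unpair.2 % 2 = 1 := fun ⟨x, hx, hodd⟩ => by
    have := (hmem x hx).2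
    omega
  rw [sdLearner_setCode, learnerBody, if_neg hnodd, hhead, Finset.length_sort]

theorem sdLearner_eq_colIdx {D : Finset ℕ} {k : ℕ} (hall : ∀ j, diagStep k j = Part.some 0)
    (hne : D.Nonempty) (hsub : ↑D ⊆ column k) :
    sdLearner finIdx colIdx (setCode D) = Part.some (colIdx k) := by
  simp [sdLearner_of_subset_column hne hsub, hall]

theorem sdLearner_columnSeg {k j v : ℕ} (hv : diagStep k j = Part.some v) (hv0 : v ≠ 0) :
    sdLearner finIdx colIdx (setCode (columnSeg k j)) = Part.some (finIdx (columnList k j)) := by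
  have hne : (columnSeg k j).Nonempty := ⟨columnPt k 0, Finset.mem_image_of_mem _ (by simp)⟩
  have hcard : (columnSeg k j).card - 1 = j := by
    rw [columnSeg, Finset.card_image_of_injective _ (columnPt_injective k), Finset.card_range]
    omega
  simp [sdLearner_of_subset_column hne (columnSeg_subset_column k j), hcard, hv, hv0,
    sort_columnSeg]

theorem cIndex_of_sdLearner_eq (hfin : ∀ l, CIndex (finIdx l)) (hcol : ∀ k, CIndex (colIdx k))
    {n e : ℕ} (he : sdLearner finIdx colIdx n = Part.some e) : CIndex e := by
  obtain ⟨l, -, hl⟩ := Part.mem_bind_iff.1 (Part.eq_some_iff.1 he)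
  unfold learnerBody at hl
  split_ifs at hl
  · exact Part.mem_some_iff.1 hl ▸ hfin l
  · obtain ⟨v, -, rfl⟩ := Part.mem_map_iff _ |>.1 hl
    split_ifs
    exacts [hcol _, hfin l]

theorem sdLearner_learns_diagLang
    (hfin : ∀ l, CIndex (finIdx l) ∧ Cset (finIdx l) = {x | x ∈ l})
    (hcol : ∀ k, CIndex (colIdx k) ∧ Cset (colIdx k) = column k) (k : ℕ) :
    Learns Sdop (andRes CIndRes ExC) (sdLearner finIdx colIdx) (diagLang k) := by
  intro T hT
  refine ⟨fun _ _ he => cIndex_of_sdLearner_eq (fun l => (hfin l).1) (fun k => (hcol k).1) he,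
    exC_iff.2 ?_⟩
  rcases diagLang_cases k with ⟨hall, hL⟩ | ⟨j, v, hv, hv0, hL⟩ | ⟨j, -, hL⟩ <;> rw [hL] at hT
  · refine ⟨colIdx k, (hcol k).1, (hcol k).2.trans hT.symm, ?_⟩
    have h0 : columnPt k 0 ∈ content T := hT ▸ ⟨0, rfl⟩
    filter_upwards [eventually_mem_fincontent h0] with n hn
    exact sdLearner_eq_colIdx hall ⟨_, hn⟩ ((coe_fincontent_subset T n).trans hT.subset)
  · refine ⟨finIdx (columnList k j), (hfin _).1, ?_, ?_⟩
    · rw [(hfin _).2, hT, ← sort_columnSeg]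
      ext x
      simp
    · filter_upwards [eventually_fincontent_eq hT] with n hn
      rw [Sdop, hn, sdLearner_columnSeg hv hv0]
  · refine ⟨finIdx ((insert (marker k j) (columnSeg k j)).sort (· ≤ ·)), (hfin _).1, ?_, ?_⟩
    · rw [(hfin _).2, hT]
      ext x
      simp
    · filter_upwards [eventually_fincontent_eq hT] with n hn
      rw [Sdop, hn]
      exact sdLearner_of_odd_mem (Finset.mem_insert_self _ _) (by simp [marker_unpair])

end Learner

section Defeat

variable {h : Learner} {k : ℕ}

theorem diagStep_of_phi_eq (hk : phi k = h) {j e : ℕ}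
    (he : h (setCode (columnSeg k j)) = Part.some e) :
    diagStep k j = phi e (columnPt k (j + 1)) := by
  rw [diagStep, hk, he, Part.bind_some]

theorem not_learns_column (hk : phi k = h) (hall : ∀ j, diagStep k j = Part.some 0) :
    ¬ Learns Sdop (andRes CIndRes ExC) h (column k) := by
  intro hlearn
  have hT : content (fun i => some (columnPt k i)) = column k := content_some_comp _
  obtain ⟨e, -, hCset, hev⟩ := exC_iff.1 (hlearn _ hT).2
  obtain ⟨n, hn⟩ := ((tendsto_add_atTop_nat 1).eventually hev).exists
  have hin : columnPt k (n + 1) ∈ Cset e := hCset ▸ hT ▸ ⟨n + 1, rfl⟩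
  have hout : phi e (columnPt k (n + 1)) = Part.some 0 := by
    rw [← diagStep_of_phi_eq hk (by rwa [Sdop, fincontent_some_comp] at hn), hall]
  exact absurd (Part.some_inj.1 (hin.symm.trans hout)) one_ne_zero

theorem not_learns_columnSeg (hk : phi k = h) {j v : ℕ} (hv : diagStep k j = Part.some v)
    (hv0 : v ≠ 0) : ¬ Learns Sdop (andRes CIndRes ExC) h ↑(columnSeg k j) := by
  intro hlearn
  have hT : content (fun i => some (columnPt k (min i j))) = ↑(columnSeg k j) := by
    rw [content_some_comp]
    ext x
    simp only [Set.mem_range, columnSeg, Finset.coe_image, Finset.coe_range, Set.mem_image,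
      Set.mem_Iio]
    constructor
    · rintro ⟨i, rfl⟩
      exact ⟨min i j, by omega, rfl⟩
    · rintro ⟨i, hi, rfl⟩
      exact ⟨i, by rw [min_eq_left (by omega)]⟩
  obtain ⟨e, hC, hCset, hev⟩ := exC_iff.1 (hlearn _ hT).2
  obtain ⟨n, hn, hfc⟩ := (hev.and (eventually_fincontent_eq hT)).exists
  have hprobe := diagStep_of_phi_eq hk (by rwa [Sdop, hfc] at hn)
  rcases hC (columnPt k (j + 1)) with h0 | h1
  · exact hv0 (Part.some_inj.1 (hv.symm.trans (hprobe.trans h0)))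
  · have hin : columnPt k (j + 1) ∈ Cset e := h1
    rw [hCset, hT] at hin
    exact columnPt_succ_not_mem_columnSeg k j hin

theorem not_learns_insert_marker (htot : ∀ x, (h x).Dom) (hk : phi k = h) {j : ℕ}
    (hdiv : ¬(diagStep k j).Dom) :
    ¬ Learns Sdop (andRes CIndRes ExC) h ↑(insert (marker k j) (columnSeg k j)) := by
  intro hlearn
  let f : ℕ → ℕ := fun i => if i ≤ j then columnPt k i else marker k j
  have hT : content (fun i => some (f i)) = ↑(insert (marker k j) (columnSeg k j)) := by
    rw [content_some_comp]
    ext x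
    simp only [Set.mem_range, f, columnSeg, Finset.coe_insert, Finset.coe_image,
      Finset.coe_range, Set.mem_insert_iff, Set.mem_image, Set.mem_Iio]
    constructor
    · rintro ⟨i, rfl⟩
      split_ifs with hi
      exacts [Or.inr ⟨i, by omega, rfl⟩, Or.inl rfl]
    · rintro (rfl | ⟨i, hi, rfl⟩)
      exacts [⟨j + 1, by simp⟩, ⟨i, by simp [show i ≤ j by omega]⟩]
  have hfc : fincontent (fun i => some (f i)) (j + 1) = columnSeg k j := by
    rw [fincontent_some_comp]
    exact Finset.image_congr fun i hi => if_pos (by simpa [Nat.lt_succ_iff] using hi)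
  have he : h (setCode (columnSeg k j)) = Part.some ((h _).get (htot _)) :=
    (Part.some_get _).symm
  have hC := (hlearn _ hT).1 (j + 1) _ (by rw [Sdop, hfc, he])
  apply hdiv
  rw [diagStep_of_phi_eq hk he]
  rcases hC (columnPt k (j + 1)) with hv | hv <;> rw [hv] <;> trivial

theorem not_learns_diagLang (hh : TotalComputable h) (hk : phi k = h) :
    ¬ Learns Sdop (andRes CIndRes ExC) h (diagLang k) := by
  rcases diagLang_cases k with ⟨hall, hL⟩ | ⟨j, v, hv, hv0, hL⟩ | ⟨j, hdiv, hL⟩ <;> rw [hL]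
  exacts [not_learns_column hk hall, not_learns_columnSeg hk hv hv0,
    not_learns_insert_marker hh.2 hk hdiv]

end Defeat

theorem diagClass_mem_learnableREC :
    diagClass ∈ LearnableREC PartComputable Sdop (andRes CIndRes ExC) := by
  obtain ⟨finIdx, hfinc, hfin⟩ := exists_computable_listIndex
  obtain ⟨colIdx, hcolc, hcol⟩ := exists_computable_columnIndex
  have hlearn := sdLearner_learns_diagLang hfin hcol
  exact ⟨Set.forall_mem_range.2 fun k => recLang_of_learns (hlearn k),
    sdLearner finIdx colIdx, sdLearner_partrec hfinc hcolc, Set.forall_mem_range.2 hlearn⟩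

theorem diagClass_not_mem_learnableREC_total :
    diagClass ∉ LearnableREC TotalComputable Sdop (andRes CIndRes ExC) := by
  rintro ⟨-, h, hh, hl⟩
  obtain ⟨k, hk⟩ := exists_phi_eq hh.1
  exact not_learns_diagLang hh hk (hl _ ⟨k, rfl⟩)

/-- `[ℛTxtSdCIndEx_C]_REC ⊊ [TxtSdCIndEx_C]_REC`. -/
theorem total_sd_cind_ssubset :
    LearnableREC TotalComputable Sdop (andRes CIndRes ExC) ⊂
      LearnableREC PartComputable Sdop (andRes CIndRes ExC) :=
  (Set.ssubset_iff_of_subset (learnableREC_mono fun _ hh => hh.1)).2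
    ⟨diagClass, diagClass_mem_learnableREC, diagClass_not_mem_learnableREC_total⟩

end InductiveInference
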